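/- Let 0 < ε ≤ 1/2, σ > 0, μ ∈ ℝ, let q ∈ ℝ satisfy Φ(q) = ε, and set λ = −qσ (so λ ≥ 0). Then the Lebesgue measure of the set { u ∈ (0, 1] : Φ(−|μ − log u| / σ) ≥ ε } equals max{ 1 − e^{μ − λ}, 0 } + min{ e^{μ + λ} − 1, 0 }. -/

import Mathlib

/-!
Since `Φ` is strictly increasing with `Φ(0) = 1/2`, the condition `Φ(q) = ε ≤ 1/2` forces
`q ≤ 0`, and `Φ(−|μ − log u|/σ) ≥ Φ(q)` is equivalent to `|μ − log u| ≤ λ`, i.e. to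
`u ∈ [e^{μ−λ}, e^{μ+λ}]`. The set in question is therefore the interval
`[e^{μ−λ}, min(e^{μ+λ}, 1)]`, whose length is the stated expression.
-/

open MeasureTheory

/-- The standard normal cumulative distribution function. -/
noncomputable def Phi (x : ℝ) : ℝ :=
  ∫ t in Set.Iic x, Real.exp (-t^2/2) / Real.sqrt (2 * Real.pi)

open Real Set

noncomputable def stdNormalPDF (t : ℝ) : ℝ := exp (-t ^ 2 / 2) / √(2 * π)

lemma Phi_eq_setIntegral_stdNormalPDF (x : ℝ) : Phi x = ∫ t in Iic x, stdNormalPDF t := rfl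

lemma stdNormalPDF_pos (t : ℝ) : 0 < stdNormalPDF t :=
  div_pos (exp_pos _) (sqrt_pos.mpr (by positivity))

lemma stdNormalPDF_neg (t : ℝ) : stdNormalPDF (-t) = stdNormalPDF t := by
  simp only [stdNormalPDF, neg_sq]

lemma stdNormalPDF_eq_exp_neg_mul_sq (t : ℝ) :
    stdNormalPDF t = exp (-(1 / 2) * t ^ 2) / √(2 * π) := by
  rw [stdNormalPDF]; ring_nf

lemma integrable_stdNormalPDF : Integrable stdNormalPDF := by
  have h := (integrable_exp_neg_mul_sq (b := 1 / 2) one_half_pos).div_const (√(2 * π))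
  simpa only [← stdNormalPDF_eq_exp_neg_mul_sq] using h

lemma integral_stdNormalPDF : ∫ t, stdNormalPDF t = 1 := by
  simp only [stdNormalPDF_eq_exp_neg_mul_sq, integral_div, integral_gaussian]
  rw [div_eq_one_iff_eq (by positivity)]
  congr 1
  ring

lemma Phi_strictMono : StrictMono Phi := by
  intro x y hxy
  have hdiff : Phi y - Phi x = ∫ t in x..y, stdNormalPDF t :=
    intervalIntegral.integral_Iic_sub_Iic integrable_stdNormalPDF.integrableOn
      integrable_stdNormalPDF.integrableOn
  have hpos : 0 < ∫ t in x..y, stdNormalPDF t :=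
    intervalIntegral.intervalIntegral_pos_of_pos integrable_stdNormalPDF.intervalIntegrable
      stdNormalPDF_pos hxy
  linarith

lemma Phi_zero : Phi 0 = 1 / 2 := by
  have hsymm : Phi 0 = ∫ t in Ioi 0, stdNormalPDF t := by
    rw [Phi_eq_setIntegral_stdNormalPDF]
    simpa only [neg_zero, stdNormalPDF_neg] using integral_comp_neg_Iic 0 stdNormalPDF
  have hsplit : Phi 0 + ∫ t in Ioi 0, stdNormalPDF t = 1 :=
    integral_stdNormalPDF ▸ intervalIntegral.integral_Iic_add_Ioi
      integrable_stdNormalPDF.integrableOn integrable_stdNormalPDF.integrableOn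
  linarith

lemma nonpos_of_Phi_le_half {q : ℝ} (hq : Phi q ≤ 1 / 2) : q ≤ 0 := by
  rw [← Phi_zero] at hq
  exact Phi_strictMono.le_iff_le.mp hq

lemma pos_and_abs_sub_log_le_iff (μ l u : ℝ) :
    0 < u ∧ |μ - log u| ≤ l ↔ u ∈ Icc (exp (μ - l)) (exp (μ + l)) := by
  constructor
  · rintro ⟨hu, hlog⟩
    rw [abs_le] at hlog
    exact ⟨(le_log_iff_exp_le hu).mp (by linarith), (log_le_iff_le_exp hu).mp (by linarith)⟩
  · rintro ⟨hlo, hhi⟩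
    have hu : 0 < u := (exp_pos _).trans_le hlo
    rw [← le_log_iff_exp_le hu] at hlo
    rw [← log_le_iff_le_exp hu] at hhi
    exact ⟨hu, abs_le.mpr ⟨by linarith, by linarith⟩⟩

lemma toReal_volume_Icc_min_one {a b : ℝ} (hab : a ≤ b) :
    (volume (Icc a (min b 1))).toReal = max (1 - a) 0 + min (b - 1) 0 := by
  rw [Real.volume_Icc, ENNReal.toReal_ofReal']
  rcases le_total b 1 with hb1 | hb1
  · rw [min_eq_left hb1, max_eq_left (by linarith), max_eq_left (by linarith),
      min_eq_left (by linarith)]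
    ring
  · rw [min_eq_right hb1, min_eq_right (by linarith), add_zero]

theorem measure_conditional_error_exceeds (ε σ μ q lam : ℝ)
    (hε' : ε ≤ 1/2) (hσ : 0 < σ)
    (hq : Phi q = ε) (hlam : lam = -(q * σ)) :
    (volume {u : ℝ | u ∈ Set.Ioc (0:ℝ) 1 ∧ ε ≤ Phi (-|μ - Real.log u| / σ)}).toReal
      = max (1 - Real.exp (μ - lam)) 0 + min (Real.exp (μ + lam) - 1) 0 := by
  have hq0 : q ≤ 0 := nonpos_of_Phi_le_half (hq ▸ hε')
  have hlam0 : 0 ≤ lam := by rw [hlam]; nlinarith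
  have hcond (x : ℝ) : ε ≤ Phi (-|x| / σ) ↔ |x| ≤ lam := by
    rw [← hq, Phi_strictMono.le_iff_le, le_div_iff₀ hσ, hlam, le_neg]
  have hset : {u : ℝ | u ∈ Ioc (0:ℝ) 1 ∧ ε ≤ Phi (-|μ - log u| / σ)}
      = Icc (exp (μ - lam)) (min (exp (μ + lam)) 1) := by
    ext u
    have := pos_and_abs_sub_log_le_iff μ lam u
    simp only [mem_ofPred_eq, mem_Ioc, hcond, mem_Icc, le_min_iff] at this ⊢
    tauto
  rw [hset, toReal_volume_Icc_min_one (exp_le_exp.mpr (by linarith))]
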